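/- Let e be a Hermite–Biehler function such that s_{π/2} ∉ ℬ(e), let n ∈ ℬ(e) and w ∈ ℂ. If the entire function z ↦ s_{π/2}(w)·n(z) − s_{π/2}(z)·n(w) belongs to ℬ(e), then n(w) = 0. -/

import Mathlib

open Complex MeasureTheory Filter Topology
open scoped ENNReal Classical

noncomputable section

/-- `f^#(z) = conj (f (conj z))`. -/
def sharp (f : ℂ → ℂ) : ℂ → ℂ := fun z => (starRingEnd ℂ) (f ((starRingEnd ℂ) z))

/-- Hermite–Biehler function: entire, no real zeros, `|e(conj z)| < |e z)|` on the upper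
half-plane. -/
def HermiteBiehler (e : ℂ → ℂ) : Prop :=
  Differentiable ℂ e ∧ (∀ x : ℝ, e x ≠ 0) ∧
    ∀ z : ℂ, 0 < z.im → ‖e ((starRingEnd ℂ) z)‖ < ‖e z‖

/-- Hardy space `H²` of the upper half-plane. -/
def HardyH2 (f : ℂ → ℂ) : Prop :=
  DifferentiableOn ℂ f {z : ℂ | 0 < z.im} ∧
    ∃ C : ℝ≥0∞, C ≠ ⊤ ∧ ∀ y : ℝ, 0 < y →
      eLpNorm (fun x : ℝ => f (x + y * Complex.I)) 2 volume ≤ C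

/-- Membership in the de Branges space `ℬ(e)`. -/
def MemDB (e f : ℂ → ℂ) : Prop :=
  Differentiable ℂ f ∧ HardyH2 (fun z => f z / e z) ∧ HardyH2 (fun z => sharp f z / e z)

/-- The associated functions `s_β`. -/
def sFun (e : ℂ → ℂ) (β : ℝ) : ℂ → ℂ := fun z =>
  (Complex.I / 2) * (Complex.exp (Complex.I * β) * e z -
    Complex.exp (-(Complex.I * β)) * sharp e z)

/-- Integrand of the de Branges inner product `⟨g, f⟩`. -/
def dbItg (e g f : ℂ → ℂ) (x : ℝ) : ℂ :=
  (starRingEnd ℂ) (g x) * f x / ((‖e x‖ : ℝ) : ℂ) ^ 2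

/-- The domain of the canonical selfadjoint extension `S_β`, `β ∈ (0,π)`. -/
def domS (e : ℂ → ℂ) (β : ℝ) : Set (ℂ → ℂ) :=
  {g | Differentiable ℂ g ∧ ∃ f : ℂ → ℂ, MemDB e f ∧ ∃ w : ℂ, ∀ z : ℂ, z ≠ w →
    g z = (sFun e β w * f z - sFun e β z * f w) / (Real.sin β * (z - w))}

lemma DifferentiableOn.continuous_horizontal_line {f : ℂ → ℂ}
    (hf : DifferentiableOn ℂ f {z : ℂ | 0 < z.im}) {y : ℝ} (hy : 0 < y) :
    Continuous (fun x : ℝ => f (x + y * I)) := by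
  have hopen : IsOpen {z : ℂ | 0 < z.im} := isOpen_lt continuous_const continuous_im
  refine continuous_iff_continuousAt.mpr fun x => ?_
  have hx : (x : ℂ) + y * I ∈ {z : ℂ | 0 < z.im} := by simp [hy]
  exact (hf.differentiableAt (hopen.mem_nhds hx)).continuousAt.comp (g := f)
    (f := fun x : ℝ => (x : ℂ) + y * I) (continuous_ofReal.add continuous_const).continuousAt

namespace HardyH2

lemma add {f g : ℂ → ℂ} (hf : HardyH2 f) (hg : HardyH2 g) :
    HardyH2 (fun z => f z + g z) := by
  obtain ⟨hfd, C, hC, hCb⟩ := hf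
  obtain ⟨hgd, D, hD, hDb⟩ := hg
  refine ⟨hfd.add hgd, C + D, ENNReal.add_ne_top.mpr ⟨hC, hD⟩, fun y hy => ?_⟩
  calc eLpNorm (fun x : ℝ => f (x + y * I) + g (x + y * I)) 2 volume
      ≤ eLpNorm (fun x : ℝ => f (x + y * I)) 2 volume
        + eLpNorm (fun x : ℝ => g (x + y * I)) 2 volume :=
        eLpNorm_add_le (hfd.continuous_horizontal_line hy).aestronglyMeasurable
          (hgd.continuous_horizontal_line hy).aestronglyMeasurable (by norm_num)
    _ ≤ C + D := add_le_add (hCb y hy) (hDb y hy)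

lemma const_mul {f : ℂ → ℂ} (c : ℂ) (hf : HardyH2 f) : HardyH2 (fun z => c * f z) := by
  obtain ⟨hfd, C, hC, hCb⟩ := hf
  refine ⟨hfd.const_mul c, ‖c‖ₑ * C, ENNReal.mul_ne_top enorm_ne_top hC, fun y hy => ?_⟩
  calc eLpNorm (fun x : ℝ => c * f (x + y * I)) 2 volume
      = ‖c‖ₑ * eLpNorm (fun x : ℝ => f (x + y * I)) 2 volume :=
        eLpNorm_const_smul c (fun x : ℝ => f (x + y * I)) 2 volume
    _ ≤ ‖c‖ₑ * C := by gcongr; exact hCb y hy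

end HardyH2

namespace MemDB

variable {e f g : ℂ → ℂ}

lemma add (hf : MemDB e f) (hg : MemDB e g) : MemDB e (fun z => f z + g z) := by
  obtain ⟨hfd, hf₁, hf₂⟩ := hf
  obtain ⟨hgd, hg₁, hg₂⟩ := hg
  refine ⟨hfd.add hgd, ?_, ?_⟩
  · simpa only [add_div] using hf₁.add hg₁
  · simpa only [sharp, map_add, add_div] using hf₂.add hg₂

lemma const_mul (c : ℂ) (hf : MemDB e f) : MemDB e (fun z => c * f z) := by
  obtain ⟨hfd, hf₁, hf₂⟩ := hf
  refine ⟨hfd.const_mul c, ?_, ?_⟩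
  · simpa only [mul_div_assoc] using hf₁.const_mul c
  · simpa only [sharp, map_mul, mul_div_assoc] using hf₂.const_mul (starRingEnd ℂ c)

end MemDB

theorem vanishing_of_n_general (e : ℂ → ℂ)
    (hs : ¬ MemDB e (sFun e (Real.pi / 2)))
    (n : ℂ → ℂ) (hn : MemDB e n) (w : ℂ)
    (hmem : MemDB e (fun z => sFun e (Real.pi / 2) w * n z - sFun e (Real.pi / 2) z * n w)) :
    n w = 0 := by
  set s := sFun e (Real.pi / 2)
  by_contra hnw
  have hs_eq : s = fun z => s w / n w * n z + -(n w)⁻¹ * (s w * n z - s z * n w) := by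
    funext z
    field_simp
    ring
  exact hs (hs_eq ▸ (hn.const_mul _).add (hmem.const_mul _))

/-- If `s_{π/2} ∉ ℬ(e)`, `n ∈ ℬ(e)`, `w ∈ ℂ` and
`z ↦ s_{π/2}(w) n(z) - s_{π/2}(z) n(w)` belongs to `ℬ(e)`, then `n(w) = 0`. -/
theorem vanishing_of_n (e : ℂ → ℂ) (he : HermiteBiehler e)
    (hs : ¬ MemDB e (sFun e (Real.pi / 2)))
    (n : ℂ → ℂ) (hn : MemDB e n) (w : ℂ)
    (hmem : MemDB e (fun z => sFun e (Real.pi / 2) w * n z - sFun e (Real.pi / 2) z * n w)) :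
    n w = 0 :=
  vanishing_of_n_general e hs n hn w hmem
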